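/- arXiv:2412.01774 — 2 statements merged into one kernel-verified Lean document; each statement's English description precedes it below -/
import Mathlib

section
/- Let A be a finitely generated P-graded domain over ℂ (P a finite rank free abelian group), w ∈ P a character, and R = ⊕_{n≥0} A_{nw} the ring of invariants for the linearization given by w. If for some homogeneous f ∈ R of positive degree the graded R_f-module R_f(1) is free, generated by an element g ∈ A_w, then every point x ∈ Spec(A_f) with stabilizer λ ∈ T^P (i.e. λ·x = x) satisfies w(λ) = 1. -/
/-- Let `A` be a finitely generated `P`-graded domain over `ℂ`, `w ∈ P` a
character, and `R = ⊕_{m ≥ 0} A_{mw}` the ring of invariant sections for the linearization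
given by `w`.  Suppose `f ∈ R` is homogeneous of positive degree (i.e. `f ∈ A_{n•w}`,
`n > 0`), and the graded `R_f`-module `R_f(1)` is free, generated by an element `g ∈ A_w`
(freeness of the generator is encoded by `g ≠ 0` together with the generation property
`hgen`: every homogeneous element of degree `(k+1)w` becomes, after clearing denominators
by a power of `f`, a multiple of `g` by a homogeneous element of the appropriate degree).
Then every point `x ∈ Spec(A_f)` (a `ℂ`-point with `x f ≠ 0`) whose stabilizer contains
`lam ∈ T^P = Hom(P, ℂˣ)` (i.e. `lam` fixes `x`, acting on `A_p` through `lam p`)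
satisfies `w(lam) = 1`. -/
theorem stmt2 {P : Type} [AddCommGroup P] [DecidableEq P]
    {A : Type} [CommRing A] [IsDomain A] [Algebra ℂ A]
    (hfg : Algebra.FiniteType ℂ A)
    (𝒜 : P → Submodule ℂ A) [GradedAlgebra 𝒜]
    (w : P) (n : ℕ) (hn : 0 < n)
    (f : A) (hf : f ∈ 𝒜 (n • w))
    (g : A) (hgw : g ∈ 𝒜 w) (hg0 : g ≠ 0)
    (hgen : ∀ k : ℕ, ∀ a ∈ 𝒜 ((k + 1) • w),
      ∃ j : ℕ, ∃ r ∈ 𝒜 ((k + j * n) • w), a * f ^ j = g * r)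
    (x : A →ₐ[ℂ] ℂ) (hx : x f ≠ 0)
    (lam : P → ℂˣ) (hlam : ∀ p q : P, lam (p + q) = lam p * lam q)
    (hfix : ∀ p : P, ∀ a ∈ 𝒜 p, (lam p : ℂ) * x a = x a) :
    lam w = 1 := by
  obtain ⟨j, r, hr, heq⟩ := hgen (n - 1) f (by rwa [Nat.sub_add_cancel hn])
  have hxg : x g ≠ 0 := by
    intro h0
    have h1 := congrArg x heq
    rw [map_mul, map_mul, map_pow, h0, zero_mul] at h1
    rcases mul_eq_zero.mp h1 with h | h
    · exact hx h
    · exact hx (pow_eq_zero_iff'.mp h).1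
  have h := hfix w g hgw
  have h2 : ((lam w : ℂ) - 1) * x g = 0 := by linear_combination h
  rcases mul_eq_zero.mp h2 with h | h
  · exact Units.ext (by rw [Units.val_one]; linear_combination h)
  · exact absurd h hxg
end

section
/- Let A = ⊕_{g ∈ S} ℤ·θ_g be a commutative ring which is free as a ℤ-module with basis indexed by a set S, suppose there is a submonoid M ⊆ S with a monoid action on S satisfying θ_e · θ_v = θ_{e+v} for e ∈ M, v ∈ S, and M is generated by elements Z₁,…,Z_r. Then in the localization of A at the product θ_{Z₁}···θ_{Z_r}, every θ_{Z_i} is invertible, and if the action of the group completion M^gp on itself extends to S making S an M^gp-set with the same multiplication rule, then the localization A[(θ_{Z₁}···θ_{Z_r})⁻¹] is free with basis indexed by M^gp · S. -/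
/-!
Put `σ = Z₁ + ⋯ + Z_r` and `t = θ_{Z₁} ⋯ θ_{Z_r}`. The multiplication rule gives
`t · θ_v = θ_{σ + v}` for `v ∈ S`, so multiplication by `t` maps the basis injectively into
itself: `t` is a non-zero-divisor and `A[t⁻¹] = ⋃ₙ t⁻ⁿ A`. The elements `θ_{nσ + x} / tⁿ`, for the
points `x` with `nσ + x ∈ S` for some `n`, do not depend on `n` and form a basis of `A[t⁻¹]`:
finitely many of them are all of this form for one common `n`, and `a ↦ a / tⁿ` is injective.
Finally every element of `M` lies below a multiple of `σ` and `M` generates `M^gp`, so these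
points `x` are exactly `M^gp · S`.
-/

open IsLocalization

section Translation

variable {G X A : Type*} [AddGroup G] [AddAction G X] [CommRing A]
  {θ : X → A} {S : Set X} {σ : G} {t : A}

def vaddSaturation (σ : G) (S : Set X) : Set X := {x | ∃ n : ℕ, n • σ +ᵥ x ∈ S}

theorem nsmul_vadd_mem (hS : ∀ v ∈ S, σ +ᵥ v ∈ S) {v : X} (hv : v ∈ S) (n : ℕ) :
    n • σ +ᵥ v ∈ S := by
  induction n with
  | zero => simpa using hv
  | succ n ih => simpa [succ_nsmul', add_vadd] using hS _ ih

theorem pow_mul_eq_nsmul_vadd (hS : ∀ v ∈ S, σ +ᵥ v ∈ S)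
    (ht : ∀ v ∈ S, t * θ v = θ (σ +ᵥ v)) {v : X} (hv : v ∈ S) (n : ℕ) :
    t ^ n * θ v = θ (n • σ +ᵥ v) := by
  induction n with
  | zero => simp
  | succ n ih =>
    rw [pow_succ', mul_assoc, ih, ht _ (nsmul_vadd_mem hS hv n), ← add_vadd, succ_nsmul']

theorem nsmul_vadd_mem_of_le (hS : ∀ v ∈ S, σ +ᵥ v ∈ S) {x : X} {m n : ℕ} (hmn : m ≤ n)
    (hm : m • σ +ᵥ x ∈ S) : n • σ +ᵥ x ∈ S := by
  simpa [← add_vadd, ← add_nsmul, Nat.sub_add_cancel hmn] using nsmul_vadd_mem hS hm (n - m)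

theorem exists_nsmul_vadd_mem_of_finset (hS : ∀ v ∈ S, σ +ᵥ v ∈ S)
    (s : Finset (vaddSaturation σ S)) : ∃ N : ℕ, ∀ x ∈ s, N • σ +ᵥ (x : X) ∈ S := by
  choose n hn using fun x : vaddSaturation σ S => x.2
  exact ⟨s.sup n, fun x hx => nsmul_vadd_mem_of_le hS (Finset.le_sup hx) (hn x)⟩

theorem mem_nonZeroDivisors_of_mul_basis {R : Type*} [CommRing R] [Algebra R A]
    (b : Module.Basis S R A) (hb : ∀ v : S, b v = θ v) (hS : ∀ v ∈ S, σ +ᵥ v ∈ S)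
    (ht : ∀ v ∈ S, t * θ v = θ (σ +ᵥ v)) : t ∈ nonZeroDivisors A := by
  let shift : S → S := fun v => ⟨σ +ᵥ (v : X), hS v v.2⟩
  have hshift : Function.Injective shift := fun v w h =>
    Subtype.ext (vadd_left_cancel σ (congrArg Subtype.val h))
  have hmul : LinearMap.mulLeft R t ∘ b = b ∘ shift := by
    ext v
    simp [shift, hb, ht v v.2]
  have hinj : Function.Injective (LinearMap.mulLeft R t) :=
    LinearMap.injective_of_linearIndependent b.span_eq
      (hmul ▸ b.linearIndependent.comp shift hshift)
  refine mem_nonZeroDivisors_iff_right.mpr fun x hx => hinj ?_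
  simp [mul_comm t, hx]

end Translation

section AwayBasis

variable {G X R A L : Type*} [AddGroup G] [AddAction G X] [CommRing R] [CommRing A]
  [Algebra R A] [CommRing L] [Algebra A L] [Module R L] [IsScalarTower R A L]
  {θ : X → A} {S : Set X} {σ : G} {t : A} [IsLocalization.Away t L]

variable (R L t) in
noncomputable def divPowLinearMap (n : ℕ) : A →ₗ[R] L :=
  (LinearMap.mulLeft A (mk' L (1 : A) (Submonoid.pow t n)) ∘ₗ Algebra.linearMap A L).restrictScalars
    R

theorem divPowLinearMap_apply (n : ℕ) (a : A) :
    divPowLinearMap R L t n a = mk' L a (Submonoid.pow t n) := by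
  rw [mk'_eq_mul_mk'_one, mul_comm]
  rfl

theorem divPowLinearMap_injective (ht : t ∈ nonZeroDivisors A) (n : ℕ) :
    Function.Injective (divPowLinearMap R L t n) := by
  intro a a' h
  apply IsLocalization.injective L (Submonoid.powers_le.mpr ht)
  rw [← mk'_spec L a (Submonoid.pow t n), ← mk'_spec L a' (Submonoid.pow t n),
    ← divPowLinearMap_apply (R := R), ← divPowLinearMap_apply (R := R), h]

variable (L θ σ S t) in
noncomputable def awayBasisFun (x : vaddSaturation σ S) : L :=
  mk' L (θ (x.2.choose • σ +ᵥ (x : X))) (Submonoid.pow t x.2.choose)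

theorem awayBasisFun_eq (hS : ∀ v ∈ S, σ +ᵥ v ∈ S) (ht : ∀ v ∈ S, t * θ v = θ (σ +ᵥ v))
    (x : vaddSaturation σ S) {m : ℕ} (hm : m • σ +ᵥ (x : X) ∈ S) :
    awayBasisFun L θ S σ t x = mk' L (θ (m • σ +ᵥ (x : X))) (Submonoid.pow t m) := by
  rw [awayBasisFun, mk'_eq_iff_eq]
  simp only [Submonoid.pow_apply, pow_mul_eq_nsmul_vadd hS ht x.2.choose_spec,
    pow_mul_eq_nsmul_vadd hS ht hm, vadd_vadd, ← add_nsmul, add_comm]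

theorem span_range_awayBasisFun (hS : ∀ v ∈ S, σ +ᵥ v ∈ S)
    (ht : ∀ v ∈ S, t * θ v = θ (σ +ᵥ v)) (b : Module.Basis S R A) (hb : ∀ v : S, b v = θ v) :
    ⊤ ≤ Submodule.span R (Set.range (awayBasisFun L θ S σ t)) := by
  rintro z -
  obtain ⟨⟨a, _, n, rfl⟩, rfl⟩ := mk'_surjective (Submonoid.powers t) z
  have hψ : Submodule.map (divPowLinearMap R L t n) (Submodule.span R (Set.range b)) ≤
      Submodule.span R (Set.range (awayBasisFun L θ S σ t)) := by
    refine (Submodule.map_span_le _ _ _).mpr ?_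
    rintro _ ⟨v, rfl⟩
    have hv : n • σ +ᵥ (-(n • σ) +ᵥ (v : X)) ∈ S := by simp
    refine Submodule.subset_span ⟨⟨_, n, hv⟩, ?_⟩
    rw [awayBasisFun_eq hS ht _ hv, divPowLinearMap_apply, hb]
    simp
  rw [b.span_eq] at hψ
  exact hψ ⟨a, trivial, divPowLinearMap_apply n a⟩

theorem linearIndependent_awayBasisFun (hS : ∀ v ∈ S, σ +ᵥ v ∈ S)
    (ht : ∀ v ∈ S, t * θ v = θ (σ +ᵥ v)) (b : Module.Basis S R A) (hb : ∀ v : S, b v = θ v) :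
    LinearIndependent R (awayBasisFun L θ S σ t) := by
  rw [linearIndependent_iff_finset_linearIndependent]
  intro s
  obtain ⟨N, hN⟩ := exists_nsmul_vadd_mem_of_finset hS s
  let shift : s → S := fun x => ⟨N • σ +ᵥ ((x : vaddSaturation σ S) : X), hN x x.2⟩
  have hshift : Function.Injective shift := fun x y h =>
    Subtype.ext <| Subtype.ext <| vadd_left_cancel _ (congrArg Subtype.val h)
  have hψ := divPowLinearMap_injective (R := R) (L := L)
    (mem_nonZeroDivisors_of_mul_basis b hb hS ht) N
  have hfactor :
      awayBasisFun L θ S σ t ∘ Subtype.val = divPowLinearMap R L t N ∘ b ∘ shift := by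
    funext x
    simp [shift, hb, divPowLinearMap_apply, awayBasisFun_eq hS ht _ (hN x x.2)]
  rw [hfactor]
  exact (b.linearIndependent.comp shift hshift).map' _ (LinearMap.ker_eq_bot.mpr hψ)

variable (R) in
noncomputable def awayBasis (hS : ∀ v ∈ S, σ +ᵥ v ∈ S) (ht : ∀ v ∈ S, t * θ v = θ (σ +ᵥ v))
    (b : Module.Basis S R A) (hb : ∀ v : S, b v = θ v) :
    Module.Basis (vaddSaturation σ S) R L :=
  .mk (linearIndependent_awayBasisFun hS ht b hb) (span_range_awayBasisFun hS ht b hb)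

end AwayBasis

section GroupCompletion

variable {G : Type*} [AddCommGroup G] {ι : Type*} [Fintype ι] {Z : ι → G}

theorem exists_nsmul_sum_sub_mem_closure {q : G} (hq : q ∈ AddSubmonoid.closure (Set.range Z)) :
    ∃ m : ℕ, m • ∑ i, Z i - q ∈ AddSubmonoid.closure (Set.range Z) := by
  classical
  have hZ : ∀ i, Z i ∈ AddSubmonoid.closure (Set.range Z) := fun i =>
    AddSubmonoid.subset_closure (Set.mem_range_self i)
  induction hq using AddSubmonoid.closure_induction with
  | mem _ hx =>
    obtain ⟨i, rfl⟩ := hx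
    refine ⟨1, ?_⟩
    rw [one_smul, ← Finset.sum_erase_add _ _ (Finset.mem_univ i), add_sub_cancel_right]
    exact sum_mem fun j _ => hZ j
  | zero => exact ⟨0, by simp [zero_mem]⟩
  | add x y _ _ hx hy =>
    obtain ⟨m, hm⟩ := hx
    obtain ⟨n, hn⟩ := hy
    refine ⟨m + n, ?_⟩
    rw [add_nsmul, add_sub_add_comm]
    exact add_mem hm hn

theorem exists_nsmul_sum_add_mem_closure (hgen : AddSubgroup.closure (Set.range Z) = ⊤)
    (g : G) : ∃ m : ℕ, m • ∑ i, Z i + g ∈ AddSubmonoid.closure (Set.range Z) := by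
  have hg : g ∈ AddSubgroup.closure (Set.range Z) := hgen ▸ AddSubgroup.mem_top g
  induction hg using AddSubgroup.closure_induction with
  | mem x hx => exact ⟨0, by simpa using AddSubmonoid.subset_closure hx⟩
  | zero => exact ⟨0, by simp [zero_mem]⟩
  | add x y _ _ hx hy =>
    obtain ⟨m, hm⟩ := hx
    obtain ⟨n, hn⟩ := hy
    refine ⟨m + n, ?_⟩
    rw [add_nsmul, add_add_add_comm]
    exact add_mem hm hn
  | neg x _ hx =>
    obtain ⟨m, hm⟩ := hx
    obtain ⟨k, hk⟩ := exists_nsmul_sum_sub_mem_closure hm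
    refine ⟨k, ?_⟩
    have hmσ : m • ∑ i, Z i ∈ AddSubmonoid.closure (Set.range Z) :=
      nsmul_mem (sum_mem fun i _ => AddSubmonoid.subset_closure (Set.mem_range_self i)) m
    convert add_mem hk hmσ using 1
    abel

theorem setOf_vadd_eq_vaddSaturation {X : Type*} [AddAction G X] {S : Set X}
    (hgen : AddSubgroup.closure (Set.range Z) = ⊤)
    (hS : ∀ g ∈ AddSubmonoid.closure (Set.range Z), ∀ v ∈ S, g +ᵥ v ∈ S) :
    {x : X | ∃ (g : G) (v : X), v ∈ S ∧ x = g +ᵥ v} = vaddSaturation (∑ i, Z i) S := by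
  ext x
  constructor
  · rintro ⟨g, v, hv, rfl⟩
    obtain ⟨m, hm⟩ := exists_nsmul_sum_add_mem_closure hgen g
    exact ⟨m, by simpa [vadd_vadd] using hS _ hm v hv⟩
  · rintro ⟨n, hn⟩
    exact ⟨-(n • ∑ i, Z i), _, hn, by simp⟩

end GroupCompletion

theorem prod_mul_eq_sum_vadd {G X A ι : Type*} [AddCommMonoid G] [AddAction G X] [CommRing A]
    {θ : X → A} {S : Set X} {M : AddSubmonoid G} (φ : G → A)
    (hS : ∀ g ∈ M, ∀ v ∈ S, g +ᵥ v ∈ S) (hrule : ∀ g ∈ M, ∀ v ∈ S, φ g * θ v = θ (g +ᵥ v))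
    (s : Finset ι) {Z : ι → G} (hZ : ∀ i ∈ s, Z i ∈ M) {v : X} (hv : v ∈ S) :
    (∏ i ∈ s, φ (Z i)) * θ v = θ ((∑ i ∈ s, Z i) +ᵥ v) := by
  classical
  induction s using Finset.induction_on with
  | empty => simp
  | insert i s hi ih =>
    have hsum : (∑ j ∈ s, Z j) ∈ M := sum_mem fun j hj => hZ j (Finset.mem_insert_of_mem hj)
    have hZi : Z i ∈ M := hZ i (Finset.mem_insert_self i s)
    rw [Finset.prod_insert hi, Finset.sum_insert hi, mul_assoc,
      ih fun j hj => hZ j (Finset.mem_insert_of_mem hj), hrule _ hZi _ (hS _ hsum v hv), add_vadd]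

theorem stmt7_general {G : Type} [AddCommGroup G] {Sbar : Type} [AddAction G Sbar]
    {A : Type} [CommRing A] (θ : Sbar → A) (S : Set Sbar)
    (b : Module.Basis S ℤ A) (hb : ∀ v : S, b v = θ v)
    (ι : G → Sbar)
    {r : ℕ} (Z : Fin r → G)
    (hgen : AddSubgroup.closure (Set.range Z) = ⊤)
    (hSclosed : ∀ g ∈ AddSubmonoid.closure (Set.range Z), ∀ v ∈ S, g +ᵥ v ∈ S)
    (hrule : ∀ g ∈ AddSubmonoid.closure (Set.range Z), ∀ v ∈ S,
      θ (ι g) * θ v = θ (g +ᵥ v)) :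
    (∀ i : Fin r,
      IsUnit (algebraMap A (Localization.Away (∏ i, θ (ι (Z i)))) (θ (ι (Z i))))) ∧
    Nonempty (Module.Basis {x : Sbar | ∃ (g : G) (v : Sbar), v ∈ S ∧ x = g +ᵥ v} ℤ
      (Localization.Away (∏ i, θ (ι (Z i))))) := by
  have hZ : ∀ i, Z i ∈ AddSubmonoid.closure (Set.range Z) := fun i =>
    AddSubmonoid.subset_closure (Set.mem_range_self i)
  refine ⟨fun i => IsLocalization.Away.isUnit_of_dvd _
    (Finset.dvd_prod_of_mem (fun i => θ (ι (Z i))) (Finset.mem_univ i)), ?_⟩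
  have hσ : ∀ v ∈ S, (∑ i, Z i) +ᵥ v ∈ S := hSclosed _ (sum_mem fun i _ => hZ i)
  have ht : ∀ v ∈ S, (∏ i, θ (ι (Z i))) * θ v = θ ((∑ i, Z i) +ᵥ v) := fun v hv =>
    prod_mul_eq_sum_vadd (fun g => θ (ι g)) hSclosed hrule _ (fun i _ => hZ i) hv
  rw [setOf_vadd_eq_vaddSaturation hgen hSclosed]
  exact ⟨awayBasis ℤ hσ ht b hb⟩

/-- Let `A = ⊕_{g ∈ S} ℤ·θ_g` be a commutative ring, free as a `ℤ`-module
with basis indexed by a subset `S` of a set `S̄` on which the group completion `M^gp = G`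
of a monoid `M ⊆ S` acts, with `θ_e · θ_v = θ_{e+v}` for `e ∈ M`, `v ∈ S`, and `M`
generated by elements `Z₁, …, Z_r`.  Then in the localization of `A` at
`θ_{Z₁} ⋯ θ_{Z_r}` every `θ_{Z_i}` is invertible, and (the action of `M^gp` being defined
on all of `S̄`, with the same multiplication rule on `M`) the localization
`A[(θ_{Z₁} ⋯ θ_{Z_r})⁻¹]` is free with basis indexed by `M^gp · S`. -/
theorem stmt7 {G : Type} [AddCommGroup G] {Sbar : Type} [AddAction G Sbar]
    {A : Type} [CommRing A] (θ : Sbar → A) (S : Set Sbar)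
    (b : Module.Basis S ℤ A) (hb : ∀ v : S, b v = θ v)
    (ι : G → Sbar) (hι : ∀ g h : G, ι (g + h) = g +ᵥ ι h)
    {r : ℕ} (Z : Fin r → G)
    (hgen : AddSubgroup.closure (Set.range Z) = ⊤)
    (hM : ∀ g ∈ AddSubmonoid.closure (Set.range Z), ι g ∈ S)
    (hSclosed : ∀ g ∈ AddSubmonoid.closure (Set.range Z), ∀ v ∈ S, g +ᵥ v ∈ S)
    (hrule : ∀ g ∈ AddSubmonoid.closure (Set.range Z), ∀ v ∈ S,
      θ (ι g) * θ v = θ (g +ᵥ v)) :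
    (∀ i : Fin r,
      IsUnit (algebraMap A (Localization.Away (∏ i, θ (ι (Z i)))) (θ (ι (Z i))))) ∧
    Nonempty (Module.Basis {x : Sbar | ∃ (g : G) (v : Sbar), v ∈ S ∧ x = g +ᵥ v} ℤ
      (Localization.Away (∏ i, θ (ι (Z i))))) :=
  stmt7_general θ S b hb ι Z hgen hSclosed hrule
end
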